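/- arXiv:1603.07573 — 2 statements merged into one kernel-verified Lean document; each statement's English description precedes it below -/
import Mathlib

section
/- Let W be a random variable taking values in a measurable space 𝒲, and let Q_b0 : 𝒲 → ℝ be measurable (the true blip function). Suppose the margin condition holds: there exists a constant K ≥ 0 and α > 0 such that P(0 < |Q_b0(W)| ≤ t) ≤ K t^α for all t > 0. Let Q_bn : 𝒲 → ℝ be measurable with ‖Q_bn − Q_b0‖_∞ = ε (essential supremum with respect to the law of W), and define the decision rules d_n(w) = 1{Q_bn(w) > 0} and d_0(w) = 1{Q_b0(w) > 0}. Then the value loss satisfies |E[Q_b0(W)(d_n(W) − d_0(W))]| ≤ ε · P(0 < |Q_b0(W)| ≤ ε) ≤ K ε^{1+α}. -/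
/-!
Where the two rules disagree, `Q_bn` and `Q_b0` have opposite signs, so `|Q_b0| ≤ |Q_bn - Q_b0| ≤ ε`;
hence the integrand is bounded by `ε` on `{0 < |Q_b0| ≤ ε}` and vanishes elsewhere. The margin
condition at `t = ε` then bounds the mass of that set by `K ε^α`.
-/

open MeasureTheory

theorem abs_mul_sub_ite_pos_le {a b ε : ℝ} (hab : |b - a| ≤ ε) :
    |a * ((if 0 < b then (1:ℝ) else 0) - (if 0 < a then (1:ℝ) else 0))|
      ≤ if 0 < |a| ∧ |a| ≤ ε then ε else 0 := by
  have hε : 0 ≤ ε := (abs_nonneg _).trans hab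
  rcases eq_or_ne a 0 with rfl | ha
  · simp
  by_cases hagree : 0 < b ↔ 0 < a
  · simp only [hagree, sub_self, mul_zero, abs_zero]
    split_ifs <;> simp [hε]
  · have hle : |a| ≤ ε := by
      rw [abs_le] at hab ⊢
      constructor <;> by_contra! <;> apply hagree <;> constructor <;> intro <;> linarith
    rw [if_pos (show 0 < |a| ∧ |a| ≤ ε from ⟨abs_pos.2 ha, hle⟩)]
    split_ifs <;> simp_all

theorem norm_integral_le_mul_measureReal_of_norm_le_indicator {α E : Type*} [MeasurableSpace α]
    [NormedAddCommGroup E] [NormedSpace ℝ E] {μ : Measure α} {f : α → E} {s : Set α} {C : ℝ}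
    (hs : MeasurableSet s) (hμs : μ s ≠ ⊤)
    (hf : ∀ᵐ x ∂μ, ‖f x‖ ≤ s.indicator (fun _ => C) x) :
    ‖∫ x, f x ∂μ‖ ≤ C * μ.real s := by
  have hint : Integrable (s.indicator fun _ => C) μ :=
    (integrable_indicator_iff hs).2 (integrableOn_const hμs)
  calc ‖∫ x, f x ∂μ‖ ≤ ∫ x, s.indicator (fun _ => C) x ∂μ := norm_integral_le_of_norm_le hint hf
    _ = C * μ.real s := by rw [integral_indicator_const C hs, smul_eq_mul, mul_comm]

theorem stmt2_general {𝒲 : Type*} [MeasurableSpace 𝒲] (P : Measure 𝒲) [IsProbabilityMeasure P]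
    (Qb0 Qbn : 𝒲 → ℝ) (hQb0 : Measurable Qb0)
    (K α : ℝ) (hK : 0 ≤ K)
    (hmargin : ∀ t > 0, P {w | 0 < |Qb0 w| ∧ |Qb0 w| ≤ t} ≤ ENNReal.ofReal (K * t ^ α))
    (ε : ℝ) (hε : 0 < ε)
    (hsup : ∀ᵐ w ∂P, |Qbn w - Qb0 w| ≤ ε) :
    |∫ w, Qb0 w * ((if 0 < Qbn w then (1:ℝ) else 0) - (if 0 < Qb0 w then (1:ℝ) else 0)) ∂P|
      ≤ ε * (P {w | 0 < |Qb0 w| ∧ |Qb0 w| ≤ ε}).toReal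
    ∧ ε * (P {w | 0 < |Qb0 w| ∧ |Qb0 w| ≤ ε}).toReal ≤ K * ε ^ (1 + α) := by
  have hS : MeasurableSet {w | 0 < |Qb0 w| ∧ |Qb0 w| ≤ ε} :=
    (measurableSet_lt measurable_const hQb0.abs).inter (measurableSet_le hQb0.abs measurable_const)
  refine ⟨?_, ?_⟩
  · exact norm_integral_le_mul_measureReal_of_norm_le_indicator hS (measure_ne_top P _)
      (hsup.mono fun w hw => by
        rw [Real.norm_eq_abs, Set.indicator_apply]; exact abs_mul_sub_ite_pos_le hw)
  · rw [Real.rpow_add hε, Real.rpow_one, mul_left_comm]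
    exact mul_le_mul_of_nonneg_left
      (ENNReal.toReal_le_of_le_ofReal (by positivity) (hmargin ε hε)) hε.le

theorem stmt2 {𝒲 : Type*} [MeasurableSpace 𝒲] (P : Measure 𝒲) [IsProbabilityMeasure P]
    (Qb0 Qbn : 𝒲 → ℝ) (hQb0 : Measurable Qb0) (hQbn : Measurable Qbn)
    (hInt : Integrable Qb0 P)
    (K α : ℝ) (hK : 0 ≤ K) (hα : 0 < α)
    (hmargin : ∀ t > 0, P {w | 0 < |Qb0 w| ∧ |Qb0 w| ≤ t} ≤ ENNReal.ofReal (K * t ^ α))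
    (ε : ℝ) (hε : 0 < ε)
    (hsup : ∀ᵐ w ∂P, |Qbn w - Qb0 w| ≤ ε) :
    |∫ w, Qb0 w * ((if 0 < Qbn w then (1:ℝ) else 0) - (if 0 < Qb0 w then (1:ℝ) else 0)) ∂P|
      ≤ ε * (P {w | 0 < |Qb0 w| ∧ |Qb0 w| ≤ ε}).toReal
    ∧ ε * (P {w | 0 < |Qb0 w| ∧ |Qb0 w| ≤ ε}).toReal ≤ K * ε ^ (1 + α) :=
  stmt2_general P Qb0 Qbn hQb0 K α hK hmargin ε hε hsup
end

section
/- Suppose P₀ is an exceptional law failing condition (*): there is a set S ⊆ 𝒲 with P₀(W ∈ S) > 0 such that Q̄_{b,0}(w) = 0 and max_a Var(Y|A=a,W=w) > 0 for all w ∈ S. Then there exist bounded mean-zero score fluctuations (S_W, S_Y) defining a path P_ε through P₀ such that the one-sided directional derivatives of the optimal value differ: lim_{ε↑0} (Ψ(P_ε) − Ψ(P₀))/ε ≠ lim_{ε↓0} (Ψ(P_ε) − Ψ(P₀))/ε, where Ψ(P) = max_d E_P[Q̄_P(d(W),W)]. Consequently Ψ is not pathwise differentiable at P₀. -/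
open MeasureTheory Filter

/-! Write `mₐ`, `Vₐ` for the conditional mean and variance of `Y` in arm `a`. Along the
fluctuation `(1 + ε s) dQY` the conditional mean moves by `ε ∫ s y dQY`, which is `± ε Vₐ` for
the centered score `s = ± (y - mₐ)`. Tilting, on the null-blip set `S`, the arm `true` up and
the arm `false` down turns the optimal value into `∫ max (m₁ + ε V₁) (m₀ - ε V₀)`; since
`m₁ = m₀` on `S`, this is `Ψ(0) + ε ∫_S V₁` for `ε ≥ 0` and `Ψ(0) - ε ∫_S V₀` for `ε ≤ 0`.
The one-sided derivatives `∫_S V₁` and `-∫_S V₀` differ because `V₁ + V₀ > 0` on `S` and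
`QW S > 0`. -/

/-- The optimal value of the fluctuated distribution along the path indexed by `ε`:
the marginal of `W` is fluctuated by the score `SW`, and the conditional distribution
of `Y` given `(A, W)` is fluctuated by the score `SY`; the optimal value is the mean
over `W` of the best of the two treatment-arm conditional mean outcomes. -/
noncomputable def psiPath {𝒲 : Type*} [MeasurableSpace 𝒲] (QW : Measure 𝒲)
    (QY : Bool → 𝒲 → Measure ℝ) (SW : 𝒲 → ℝ) (SY : Bool → 𝒲 → ℝ → ℝ) (ε : ℝ) : ℝ :=
  ∫ w, max
      (∫ y, y ∂((QY true w).withDensity fun y => ENNReal.ofReal (1 + ε * SY true w y)))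
      (∫ y, y ∂((QY false w).withDensity fun y => ENNReal.ofReal (1 + ε * SY false w y)))
    ∂(QW.withDensity fun w => ENNReal.ofReal (1 + ε * SW w))

theorem integral_withDensity_ofReal_one_add_mul {α : Type*} [MeasurableSpace α]
    {μ : Measure α} {s g : α → ℝ} {ε : ℝ} (hs : AEMeasurable s μ)
    (hε : ∀ᵐ x ∂μ, 0 ≤ 1 + ε * s x) (hg : Integrable g μ)
    (hsg : Integrable (fun x => s x * g x) μ) :
    ∫ x, g x ∂μ.withDensity (fun x => ENNReal.ofReal (1 + ε * s x)) =
      ∫ x, g x ∂μ + ε * ∫ x, s x * g x ∂μ := by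
  rw [integral_withDensity_eq_integral_toReal_smul₀
      (by fun_prop) (Eventually.of_forall fun _ => ENNReal.ofReal_lt_top),
    ← integral_const_mul, ← integral_add hg (hsg.const_mul ε)]
  refine integral_congr_ae (hε.mono fun x hx => ?_)
  simp only [ENNReal.toReal_ofReal hx, smul_eq_mul]
  ring

theorem tendsto_div_of_eventually_eq_mul {l : Filter ℝ} {f : ℝ → ℝ} {L : ℝ}
    (hf : ∀ᶠ ε in l, f ε = ε * L) (hl : ∀ᶠ ε in l, ε ≠ 0) :
    Tendsto (fun ε => f ε / ε) l (nhds L) :=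
  tendsto_const_nhds.congr' <| by
    filter_upwards [hf, hl] with ε hfε hε
    rw [hfε, mul_div_cancel_left₀ _ hε]

theorem setIntegral_pos_of_forall_pos {X : Type*} [MeasurableSpace X] {μ : Measure X}
    {s : Set X} {f : X → ℝ} (hs : MeasurableSet s) (hμs : 0 < μ s) (hfi : IntegrableOn f s μ)
    (hf : ∀ x ∈ s, 0 < f x) : 0 < ∫ x in s, f x ∂μ := by
  rw [setIntegral_pos_iff_support_of_nonneg_ae
    (ae_restrict_of_forall_mem hs fun x hx => (hf x hx).le) hfi]
  exact hμs.trans_le (measure_mono fun x hx => ⟨(hf x hx).ne', hx⟩)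

theorem integral_max_mul_neg_mul_of_nonneg {X : Type*} [MeasurableSpace X] {μ : Measure X}
    {f g : X → ℝ} (hf : ∀ x, 0 ≤ f x) (hg : ∀ x, 0 ≤ g x) {ε : ℝ} (hε : 0 ≤ ε) :
    ∫ x, max (ε * f x) (-(ε * g x)) ∂μ = ε * ∫ x, f x ∂μ := by
  rw [← integral_const_mul]
  congr 1 with x
  exact max_eq_left (by nlinarith [mul_nonneg hε (hf x), mul_nonneg hε (hg x)])

theorem integral_max_mul_neg_mul_of_nonpos {X : Type*} [MeasurableSpace X] {μ : Measure X}
    {f g : X → ℝ} (hf : ∀ x, 0 ≤ f x) (hg : ∀ x, 0 ≤ g x) {ε : ℝ} (hε : ε ≤ 0) :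
    ∫ x, max (ε * f x) (-(ε * g x)) ∂μ = ε * -∫ x, g x ∂μ := by
  have hswap : ∀ x, max (ε * f x) (-(ε * g x)) = max (-ε * g x) (-(-ε * f x)) := fun x => by
    rw [max_comm]; ring_nf
  simp only [hswap, integral_max_mul_neg_mul_of_nonneg hg hf (neg_nonneg.mpr hε)]
  ring

theorem Measurable.integral_measure_family {α β : Type*} [MeasurableSpace α]
    [MeasurableSpace β] {f : α × β → ℝ} (hf : Measurable f) {κ : α → Measure β}
    (hκ : Measurable κ) [hκ₁ : ∀ a, IsProbabilityMeasure (κ a)] :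
    Measurable fun a => ∫ b, f (a, b) ∂κ a :=
  have : ProbabilityTheory.IsMarkovKernel ⟨κ, hκ⟩ := ⟨hκ₁⟩
  (hf.stronglyMeasurable.integral_kernel_prod_right' (κ := ⟨κ, hκ⟩)).measurable

theorem max_add_mul_indicator_of_eqOn {𝒲 : Type*} {S : Set 𝒲} {m₁ m₀ v₁ v₀ : 𝒲 → ℝ}
    (hm : ∀ w ∈ S, m₁ w = m₀ w) (ε : ℝ) (w : 𝒲) :
    max (m₁ w + ε * (S.indicator (fun _ => 1) w * v₁ w))
        (m₀ w + ε * (S.indicator (fun _ => -1) w * v₀ w)) =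
      max (m₁ w) (m₀ w) + S.indicator (fun w => max (ε * v₁ w) (-(ε * v₀ w))) w := by
  by_cases hw : w ∈ S
  · simp only [Set.indicator_of_mem hw, hm w hw, ← max_add_add_left, max_self]
    ring_nf
  · simp [Set.indicator_of_notMem hw]

noncomputable def centeredClamp (M : ℝ) (μ : Measure ℝ) (y : ℝ) : ℝ :=
  max (-M) (min M y) - ∫ z, z ∂μ

theorem measurable_centeredClamp (M : ℝ) (μ : Measure ℝ) : Measurable (centeredClamp M μ) :=
  (measurable_const.max (measurable_const.min measurable_id)).sub_const _

section BoundedLaw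

variable {μ : Measure ℝ} {M : ℝ}

theorem centeredClamp_ae_eq (hY : ∀ᵐ y ∂μ, |y| ≤ M) :
    centeredClamp M μ =ᵐ[μ] fun y => y - ∫ z, z ∂μ :=
  hY.mono fun y hy => by
    rw [abs_le] at hy
    rw [centeredClamp, min_eq_right hy.2, max_eq_right hy.1]

variable [IsProbabilityMeasure μ]

theorem integral_sub_integral_id (hμ : Integrable (fun y : ℝ => y) μ) :
    ∫ y, (y - ∫ z, z ∂μ) ∂μ = 0 := by
  rw [integral_sub hμ (integrable_const _)]
  simp

theorem integral_sub_integral_mul_self (hμ : MemLp (fun y : ℝ => y) 2 μ) :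
    ∫ y, (y - ∫ z, z ∂μ) * y ∂μ = ∫ y, (y - ∫ z, z ∂μ) ^ 2 ∂μ := by
  set m := ∫ z, z ∂μ
  have hcentered : MemLp (fun y => y - m) 2 μ := hμ.sub (memLp_const m)
  calc ∫ y, (y - m) * y ∂μ = ∫ y, ((y - m) ^ 2 + m * (y - m)) ∂μ := by
        congr 1; ext y; ring
    _ = ∫ y, (y - m) ^ 2 ∂μ := by
        rw [integral_add hcentered.integrable_sq
          ((hcentered.integrable one_le_two).const_mul m), integral_const_mul,
          integral_sub_integral_id (hμ.integrable one_le_two), mul_zero, add_zero]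

theorem integral_id_withDensity_of_ae_eq_mul_centered (hμ : MemLp (fun y : ℝ => y) 2 μ)
    {s : ℝ → ℝ} (hs : AEMeasurable s μ) {c : ℝ} (hsc : s =ᵐ[μ] fun y => c * (y - ∫ z, z ∂μ))
    {ε : ℝ} (hε : ∀ᵐ y ∂μ, 0 ≤ 1 + ε * s y) :
    ∫ y, y ∂μ.withDensity (fun y => ENNReal.ofReal (1 + ε * s y)) =
      ∫ y, y ∂μ + ε * (c * ∫ y, (y - ∫ z, z ∂μ) ^ 2 ∂μ) := by
  have hsy : (fun y => s y * y) =ᵐ[μ] fun y => c * ((y - ∫ z, z ∂μ) * y) :=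
    hsc.mono fun y hy => by simp only [hy, mul_assoc]
  have hint : Integrable (fun y => c * ((y - ∫ z, z ∂μ) * y)) μ :=
    ((hμ.sub (memLp_const _)).integrable_mul hμ).const_mul c
  rw [integral_withDensity_ofReal_one_add_mul hs hε (hμ.integrable one_le_two)
    (hint.congr hsy.symm), integral_congr_ae hsy, integral_const_mul,
    integral_sub_integral_mul_self hμ]

variable (hY : ∀ᵐ y ∂μ, |y| ≤ M)
include hY

theorem memLp_id_of_ae_abs_le (p : ENNReal) : MemLp (fun y : ℝ => y) p μ :=
  memLp_of_bounded (hY.mono fun _ hy => abs_le.mp hy) aemeasurable_id'.aestronglyMeasurable p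

theorem abs_integral_id_le : |∫ y, y ∂μ| ≤ M := by
  simpa using norm_integral_le_of_norm_le_const (μ := μ) (f := fun y => y) hY

theorem integral_sub_integral_sq_le : ∫ y, (y - ∫ z, z ∂μ) ^ 2 ∂μ ≤ M ^ 2 := by
  have := ProbabilityTheory.variance_le_sq_of_bounded (hY.mono fun _ hy => abs_le.mp hy)
    aemeasurable_id'
  rw [ProbabilityTheory.variance_eq_integral aemeasurable_id'] at this
  convert this using 1
  ring

theorem abs_centeredClamp_le (y : ℝ) : |centeredClamp M μ y| ≤ 2 * M := by
  obtain ⟨y₀, hy₀⟩ := hY.exists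
  have hM : 0 ≤ M := (abs_nonneg y₀).trans hy₀
  have hclamp : |max (-M) (min M y)| ≤ M :=
    abs_le.mpr ⟨le_max_left _ _, max_le (by linarith) (min_le_left _ _)⟩
  calc |centeredClamp M μ y| ≤ |max (-M) (min M y)| + |∫ z, z ∂μ| := abs_sub _ _
    _ ≤ 2 * M := by linarith [abs_integral_id_le hY]

theorem integral_centeredClamp : ∫ y, centeredClamp M μ y ∂μ = 0 := by
  rw [integral_congr_ae (centeredClamp_ae_eq hY),
    integral_sub_integral_id ((memLp_id_of_ae_abs_le hY 1).integrable le_rfl)]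

end BoundedLaw

section KinkScore

variable {𝒲 : Type*} (QY : Bool → 𝒲 → Measure ℝ) (M : ℝ) (S : Set 𝒲)

/-- Clamping `y` to `[-M, M]` changes nothing `QY a w`-a.e. but makes the score bounded
everywhere. -/
noncomputable def kinkScore (a : Bool) (w : 𝒲) (y : ℝ) : ℝ :=
  S.indicator (fun _ => if a then 1 else -1) w * centeredClamp M (QY a w) y

variable {QY M S}

theorem measurable_kinkScore (a : Bool) (w : 𝒲) : Measurable (kinkScore QY M S a w) :=
  (measurable_centeredClamp M (QY a w)).const_mul _

variable [∀ a w, IsProbabilityMeasure (QY a w)] (hY : ∀ a w, ∀ᵐ y ∂QY a w, |y| ≤ M)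
include hY

theorem abs_kinkScore_le (a : Bool) (w : 𝒲) (y : ℝ) : |kinkScore QY M S a w y| ≤ 2 * M := by
  have hsign : |S.indicator (fun _ => if a then (1 : ℝ) else -1) w| ≤ 1 := by
    by_cases hw : w ∈ S <;> cases a <;> simp [hw]
  rw [kinkScore, abs_mul]
  nlinarith [abs_nonneg (centeredClamp M (QY a w) y), abs_centeredClamp_le (hY a w) y]

theorem integral_kinkScore (a : Bool) (w : 𝒲) : ∫ y, kinkScore QY M S a w y ∂QY a w = 0 := by
  simp only [kinkScore, integral_const_mul, integral_centeredClamp (hY a w), mul_zero]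

theorem integral_id_withDensity_kinkScore {ε : ℝ} (hε : |ε| * (2 * M) ≤ 1)
    (a : Bool) (w : 𝒲) :
    ∫ y, y ∂(QY a w).withDensity (fun y => ENNReal.ofReal (1 + ε * kinkScore QY M S a w y)) =
      ∫ y, y ∂QY a w + ε * (S.indicator (fun _ => if a then 1 else -1) w *
        ∫ y, (y - ∫ z, z ∂QY a w) ^ 2 ∂QY a w) := by
  refine integral_id_withDensity_of_ae_eq_mul_centered (memLp_id_of_ae_abs_le (hY a w) 2)
    (measurable_kinkScore a w).aemeasurable
    ((centeredClamp_ae_eq (hY a w)).mono fun y hy => by simp only [kinkScore, hy])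
    (Eventually.of_forall fun y => ?_)
  have : |ε * kinkScore QY M S a w y| ≤ 1 := by
    rw [abs_mul]
    nlinarith [abs_nonneg ε, abs_kinkScore_le (S := S) hY a w y]
  linarith [neg_abs_le (ε * kinkScore QY M S a w y)]

end KinkScore

section KinkPath

variable {𝒲 : Type*} [MeasurableSpace 𝒲] {QW : Measure 𝒲} [IsProbabilityMeasure QW]
  {QY : Bool → 𝒲 → Measure ℝ} [∀ a w, IsProbabilityMeasure (QY a w)] {M : ℝ} {S : Set 𝒲}
  (hQYmeas : ∀ a, Measurable fun w => QY a w) (hY : ∀ a w, ∀ᵐ y ∂QY a w, |y| ≤ M)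
include hQYmeas hY

theorem integrable_max_integral_id :
    Integrable (fun w => max (∫ y, y ∂QY true w) (∫ y, y ∂QY false w)) QW := by
  have hmeas (a : Bool) : Measurable fun w => ∫ y, y ∂QY a w :=
    measurable_snd.integral_measure_family (hQYmeas a)
  refine Integrable.of_bound ((hmeas true).max (hmeas false)).aestronglyMeasurable M
    (Eventually.of_forall fun w => ?_)
  exact abs_max_le_max_abs_abs.trans
    (max_le (abs_integral_id_le (hY true w)) (abs_integral_id_le (hY false w)))

theorem integrable_integral_sub_integral_sq (a : Bool) :
    Integrable (fun w => ∫ y, (y - ∫ z, z ∂QY a w) ^ 2 ∂QY a w) QW := by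
  have hmean : Measurable fun w => ∫ y, y ∂QY a w :=
    measurable_snd.integral_measure_family (hQYmeas a)
  refine Integrable.of_bound (((measurable_snd.sub (hmean.comp measurable_fst)).pow_const 2
    ).integral_measure_family (hQYmeas a)).aestronglyMeasurable (M ^ 2)
    (Eventually.of_forall fun w => ?_)
  rw [Real.norm_of_nonneg (integral_nonneg fun y => sq_nonneg _)]
  exact integral_sub_integral_sq_le (hY a w)

theorem psiPath_kinkScore (hS : MeasurableSet S)
    (hblip : ∀ w ∈ S, ∫ y, y ∂QY true w = ∫ y, y ∂QY false w) {ε : ℝ}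
    (hε : |ε| * (2 * M) ≤ 1) :
    psiPath QW QY 0 (kinkScore QY M S) ε =
      ∫ w, max (∫ y, y ∂QY true w) (∫ y, y ∂QY false w) ∂QW +
        ∫ w in S, max (ε * ∫ y, (y - ∫ z, z ∂QY true w) ^ 2 ∂QY true w)
          (-(ε * ∫ y, (y - ∫ z, z ∂QY false w) ^ 2 ∂QY false w)) ∂QW := by
  have hkink : Integrable (fun w => max (ε * ∫ y, (y - ∫ z, z ∂QY true w) ^ 2 ∂QY true w)
      (-(ε * ∫ y, (y - ∫ z, z ∂QY false w) ^ 2 ∂QY false w))) QW :=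
    ((integrable_integral_sub_integral_sq hQYmeas hY true).const_mul ε).sup
      ((integrable_integral_sub_integral_sq hQYmeas hY false).const_mul ε).neg
  simp only [psiPath, Pi.zero_apply, mul_zero, add_zero, ENNReal.ofReal_one, withDensity_const,
    one_smul, integral_id_withDensity_kinkScore hY hε, if_true, Bool.false_eq_true, if_false]
  rw [funext (max_add_mul_indicator_of_eqOn hblip ε),
    integral_add (integrable_max_integral_id hQYmeas hY) (hkink.indicator hS),
    integral_indicator hS]

theorem eventually_psiPath_kinkScore_sub (hS : MeasurableSet S)
    (hblip : ∀ w ∈ S, ∫ y, y ∂QY true w = ∫ y, y ∂QY false w) :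
    ∀ᶠ ε in nhds 0,
      psiPath QW QY 0 (kinkScore QY M S) ε - psiPath QW QY 0 (kinkScore QY M S) 0 =
        ∫ w in S, max (ε * ∫ y, (y - ∫ z, z ∂QY true w) ^ 2 ∂QY true w)
          (-(ε * ∫ y, (y - ∫ z, z ∂QY false w) ^ 2 ∂QY false w)) ∂QW := by
  have hsmall : ∀ᶠ ε in nhds (0 : ℝ), |ε| * (2 * M) ≤ 1 :=
    ((continuous_abs.mul continuous_const).tendsto' (0 : ℝ) 0 (by simp)).eventually
      (eventually_le_nhds zero_lt_one)
  filter_upwards [hsmall] with ε hε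
  rw [psiPath_kinkScore hQYmeas hY hS hblip hε,
    psiPath_kinkScore hQYmeas hY hS hblip (by simp)]
  simp

end KinkPath

theorem stmt17_general {𝒲 : Type*} [MeasurableSpace 𝒲]
    (QW : Measure 𝒲) [IsProbabilityMeasure QW]
    (QY : Bool → 𝒲 → Measure ℝ)
    (hQYprob : ∀ a w, IsProbabilityMeasure (QY a w))
    (hQYmeas : ∀ a, Measurable fun w => QY a w)
    (M : ℝ) (hYbdd : ∀ a w, ∀ᵐ y ∂QY a w, |y| ≤ M)
    (S : Set 𝒲) (hSmeas : MeasurableSet S) (hSpos : 0 < QW S)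
    (hzeroblip : ∀ w ∈ S, (∫ y, y ∂QY true w) = ∫ y, y ∂QY false w)
    (hvarpos : ∀ w ∈ S, ∃ a, 0 < ∫ y, (y - ∫ y', y' ∂QY a w) ^ 2 ∂QY a w) :
    ∃ (SW : 𝒲 → ℝ) (SY : Bool → 𝒲 → ℝ → ℝ) (CW CY : ℝ),
      Measurable SW ∧ (∀ w, |SW w| ≤ CW) ∧ (∫ w, SW w ∂QW) = 0 ∧
      (∀ a w, Measurable (SY a w)) ∧ (∀ a w y, |SY a w y| ≤ CY) ∧
      (∀ a w, (∫ y, SY a w y ∂QY a w) = 0) ∧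
      ∃ Lminus Lplus : ℝ, Lminus ≠ Lplus ∧
        Tendsto (fun ε : ℝ =>
            (psiPath QW QY SW SY ε - psiPath QW QY SW SY 0) / ε)
          (nhdsWithin 0 (Set.Iio 0)) (nhds Lminus) ∧
        Tendsto (fun ε : ℝ =>
            (psiPath QW QY SW SY ε - psiPath QW QY SW SY 0) / ε)
          (nhdsWithin 0 (Set.Ioi 0)) (nhds Lplus) := by
  have := hQYprob
  set V : Bool → 𝒲 → ℝ := fun a w => ∫ y, (y - ∫ z, z ∂QY a w) ^ 2 ∂QY a w
  have hV : ∀ a w, 0 ≤ V a w := fun a w => integral_nonneg fun y => sq_nonneg _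
  have hVint := integrable_integral_sub_integral_sq (QW := QW) hQYmeas hYbdd
  have hdiff := eventually_psiPath_kinkScore_sub (QW := QW) hQYmeas hYbdd hSmeas hzeroblip
  refine ⟨0, kinkScore QY M S, 0, 2 * M, measurable_const, by simp, by simp,
    measurable_kinkScore, abs_kinkScore_le hYbdd, integral_kinkScore hYbdd,
    -∫ w in S, V false w ∂QW, ∫ w in S, V true w ∂QW, ?_, ?_, ?_⟩
  · have hgap : 0 < ∫ w in S, (V true w + V false w) ∂QW :=
      setIntegral_pos_of_forall_pos hSmeas hSpos
      ((hVint true).add (hVint false)).integrableOn fun w hw => by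
        obtain ⟨a, ha⟩ := hvarpos w hw
        cases a <;> linarith [hV true w, hV false w]
    rw [integral_add (hVint true).integrableOn (hVint false).integrableOn] at hgap
    linarith
  · refine tendsto_div_of_eventually_eq_mul ?_
      (eventually_mem_nhdsWithin.mono fun _ h => ne_of_lt h)
    filter_upwards [nhdsWithin_le_nhds hdiff, eventually_mem_nhdsWithin] with ε hε hneg
    rw [hε, integral_max_mul_neg_mul_of_nonpos (hV true) (hV false) (le_of_lt hneg)]
  · refine tendsto_div_of_eventually_eq_mul ?_
      (eventually_mem_nhdsWithin.mono fun _ h => ne_of_gt h)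
    filter_upwards [nhdsWithin_le_nhds hdiff, eventually_mem_nhdsWithin] with ε hε hpos
    rw [hε, integral_max_mul_neg_mul_of_nonneg (hV true) (hV false) (le_of_lt hpos)]

theorem stmt17 {𝒲 : Type*} [MeasurableSpace 𝒲]
    (QW : Measure 𝒲) [IsProbabilityMeasure QW]
    (QY : Bool → 𝒲 → Measure ℝ)
    (hQYprob : ∀ a w, IsProbabilityMeasure (QY a w))
    (hQYmeas : ∀ a, Measurable fun w => QY a w)
    (M : ℝ) (hM : 0 < M) (hYbdd : ∀ a w, ∀ᵐ y ∂QY a w, |y| ≤ M)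
    (S : Set 𝒲) (hSmeas : MeasurableSet S) (hSpos : 0 < QW S)
    (hzeroblip : ∀ w ∈ S, (∫ y, y ∂QY true w) = ∫ y, y ∂QY false w)
    (hvarpos : ∀ w ∈ S, ∃ a, 0 < ∫ y, (y - ∫ y', y' ∂QY a w) ^ 2 ∂QY a w) :
    ∃ (SW : 𝒲 → ℝ) (SY : Bool → 𝒲 → ℝ → ℝ) (CW CY : ℝ),
      Measurable SW ∧ (∀ w, |SW w| ≤ CW) ∧ (∫ w, SW w ∂QW) = 0 ∧
      (∀ a w, Measurable (SY a w)) ∧ (∀ a w y, |SY a w y| ≤ CY) ∧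
      (∀ a w, (∫ y, SY a w y ∂QY a w) = 0) ∧
      ∃ Lminus Lplus : ℝ, Lminus ≠ Lplus ∧
        Tendsto (fun ε : ℝ =>
            (psiPath QW QY SW SY ε - psiPath QW QY SW SY 0) / ε)
          (nhdsWithin 0 (Set.Iio 0)) (nhds Lminus) ∧
        Tendsto (fun ε : ℝ =>
            (psiPath QW QY SW SY ε - psiPath QW QY SW SY 0) / ε)
          (nhdsWithin 0 (Set.Ioi 0)) (nhds Lplus) :=
  stmt17_general QW QY hQYprob hQYmeas M hYbdd S hSmeas hSpos hzeroblip hvarpos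
end
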